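/- Let G be a simple connected graph with closed neighborhood ideal N_G. Then the v-number of N_G is at most twice the matching number of G, that is, v(N_G) ≤ 2·a(G). -/

import Mathlib

open Finset MvPolynomial

noncomputable section
open scoped Classical

variable {V : Type*}

/-- The closed neighborhood of a vertex, as a finite set. -/
def closedNbhd [Fintype V] (G : SimpleGraph V) (v : V) : Finset V :=
  Finset.univ.filter fun u => u = v ∨ G.Adj v u

/-- The closed neighborhood of a set of vertices. -/
def closedNbhdSet [Fintype V] (G : SimpleGraph V) (A : Finset V) : Finset V :=
  A.biUnion (closedNbhd G)

/-- A dominating set of a graph. -/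
def IsDominatingSet [Fintype V] (G : SimpleGraph V) (D : Finset V) : Prop :=
  ∀ v : V, ∃ u ∈ D, v ∈ closedNbhd G u

/-- A minimal dominating set: dominating, and no proper subset dominates. -/
def IsMinimalDominatingSet [Fintype V] (G : SimpleGraph V) (D : Finset V) : Prop :=
  IsDominatingSet G D ∧ ∀ D' ⊂ D, ¬ IsDominatingSet G D'

/-- The set of external and self-private neighbors of D: the vertices whose
closed neighborhood meets D in exactly one vertex. -/
def privateNbrs [Fintype V] (G : SimpleGraph V) (D : Finset V) : Finset V :=
  Finset.univ.filter fun v => (closedNbhd G v ∩ D).card = 1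

/-- The closed neighborhood ideal of a graph, in the polynomial ring over K with
one variable for each vertex. -/
def cnIdeal (K : Type*) [Field K] [Fintype V] (G : SimpleGraph V) :
    Ideal (MvPolynomial V K) :=
  Ideal.span (Set.range fun v => ∏ u ∈ closedNbhd G v, X u)

/-- The ideal generated by the variables indexed by a set of vertices D. -/
def vertexIdeal (K : Type*) [Field K] (D : Finset V) : Ideal (MvPolynomial V K) :=
  Ideal.span ((fun v => (X v : MvPolynomial V K)) '' ↑D)

/-- The v-number of a graded ideal: the least degree d of a homogeneous polynomial f
such that the colon ideal (I : f) is an associated prime of S/I. -/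
def vNumber {K : Type*} [Field K] (I : Ideal (MvPolynomial V K)) : ℕ :=
  sInf {d : ℕ | ∃ f : MvPolynomial V K, f.IsHomogeneous d ∧
    Submodule.colon I (Ideal.span {f}) ∈
      associatedPrimes (MvPolynomial V K) (MvPolynomial V K ⧸ I)}

end

noncomputable section
open scoped Classical

/-- The domination number: the minimum cardinality of a dominating set. -/
def dominationNumber {V : Type*} [Fintype V] (G : SimpleGraph V) : ℕ :=
  sInf {n : ℕ | ∃ D : Finset V, IsDominatingSet G D ∧ D.card = n}

/-- A vertex cover: every edge is incident with a vertex of the set. -/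
def IsVertexCover {V : Type*} (G : SimpleGraph V) (C : Finset V) : Prop :=
  ∀ u v : V, G.Adj u v → u ∈ C ∨ v ∈ C

/-- The vertex cover number: the minimum cardinality of a vertex cover. -/
def coverNumber {V : Type*} [Fintype V] (G : SimpleGraph V) : ℕ :=
  sInf {n : ℕ | ∃ C : Finset V, IsVertexCover G C ∧ C.card = n}

/-- A matching: a set of edges of the graph, no two of which share a vertex. -/
def IsMatchingSet {V : Type*} (G : SimpleGraph V) (M : Finset (Sym2 V)) : Prop :=
  (↑M ⊆ G.edgeSet) ∧ (M : Set (Sym2 V)).Pairwise fun e f => ∀ v : V, ¬(v ∈ e ∧ v ∈ f)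

/-- The matching number: the maximum cardinality of a matching. -/
def matchingNumber {V : Type*} [Fintype V] (G : SimpleGraph V) : ℕ :=
  sSup {n : ℕ | ∃ M : Finset (Sym2 V), IsMatchingSet G M ∧ M.card = n}

end

/-! ### Auxiliary lemmas -/

noncomputable section VNAux
open scoped Classical
open Finset MvPolynomial

namespace VNAux

variable {V : Type*} {K : Type*} [Field K]

/-- The algebra map killing the variables in `D`. -/
def killD (K : Type*) [Field K] (D : Finset V) :
    MvPolynomial V K →ₐ[K] MvPolynomial {v : V // v ∉ D} K :=
  aeval (fun v => if h : v ∈ D then 0 else X ⟨v, h⟩)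

/-- The inclusion going back. -/
def liftD (K : Type*) [Field K] (D : Finset V) :
    MvPolynomial {v : V // v ∉ D} K →ₐ[K] MvPolynomial V K :=
  aeval (fun u => X u.1)

lemma sub_mem_vertexIdeal (D : Finset V) (f : MvPolynomial V K) :
    f - liftD K D (killD K D f) ∈ vertexIdeal K D := by
  induction f using MvPolynomial.induction_on with
  | C a =>
      simp only [killD, liftD, aeval_C]
      rw [show (algebraMap K (MvPolynomial {v : V // v ∉ D} K)) a = C a from rfl, aeval_C,
        show (algebraMap K (MvPolynomial V K)) a = C a from rfl, sub_self]
      exact zero_mem _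
  | add p q hp hq =>
      have : p + q - liftD K D (killD K D (p + q)) =
          (p - liftD K D (killD K D p)) + (q - liftD K D (killD K D q)) := by
        rw [map_add, map_add]; ring
      rw [this]; exact add_mem hp hq
  | mul_X p v hp =>
      by_cases hv : v ∈ D
      · have h1 : killD K D (X v : MvPolynomial V K) = 0 := by
          simp [killD, aeval_X, hv]
        rw [map_mul, h1, mul_zero, map_zero, sub_zero]
        have hXv : (X v : MvPolynomial V K) ∈ vertexIdeal K D :=
          Ideal.subset_span ⟨v, hv, rfl⟩
        exact Ideal.mul_mem_left _ _ hXv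
      · have h1 : killD K D (X v : MvPolynomial V K) = X ⟨v, hv⟩ := by
          simp [killD, aeval_X, hv]
        have h2 : liftD K D (X (⟨v, hv⟩ : {v : V // v ∉ D})) = X v := by
          simp [liftD, aeval_X]
        have : p * X v - liftD K D (killD K D (p * X v)) =
            (p - liftD K D (killD K D p)) * X v := by
          rw [map_mul, h1, map_mul, h2]; ring
        rw [this]
        exact Ideal.mul_mem_right _ _ hp

lemma vertexIdeal_eq_ker (D : Finset V) :
    vertexIdeal K D = RingHom.ker (killD K D : MvPolynomial V K →ₐ[K] _) := by
  apply le_antisymm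
  · rw [vertexIdeal, Ideal.span_le]
    rintro x ⟨v, hv, rfl⟩
    simp only [SetLike.mem_coe, RingHom.mem_ker]
    simp [killD, aeval_X, Finset.mem_coe.mp hv]
  · intro f hf
    have h0 : killD K D f = 0 := hf
    have := sub_mem_vertexIdeal D f
    rwa [h0, map_zero, sub_zero] at this

lemma vertexIdeal_isPrime (D : Finset V) : (vertexIdeal K D : Ideal (MvPolynomial V K)).IsPrime := by
  rw [vertexIdeal_eq_ker]
  exact RingHom.ker_isPrime _

lemma mem_of_X_mem_vertexIdeal {D : Finset V} {u : V}
    (h : (X u : MvPolynomial V K) ∈ vertexIdeal K D) : u ∈ D := by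
  by_contra hu
  rw [vertexIdeal_eq_ker] at h
  have h0 : killD K D (X u : MvPolynomial V K) = 0 := h
  rw [show killD K D (X u : MvPolynomial V K) = X ⟨u, hu⟩ by simp [killD, aeval_X, hu]] at h0
  exact X_ne_zero _ h0

variable [Fintype V] (G : SimpleGraph V)

lemma mem_closedNbhd {u v : V} : u ∈ closedNbhd G v ↔ u = v ∨ G.Adj v u := by
  simp [closedNbhd]

lemma bddAbove_matching :
    BddAbove {n : ℕ | ∃ M : Finset (Sym2 V), IsMatchingSet G M ∧ M.card = n} := by
  refine ⟨Fintype.card (Sym2 V), ?_⟩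
  rintro n ⟨M, -, rfl⟩
  simpa using M.card_le_univ

lemma matching_card_le {M : Finset (Sym2 V)} (hM : IsMatchingSet G M) :
    M.card ≤ matchingNumber G :=
  le_csSup (bddAbove_matching G) ⟨M, hM, rfl⟩

lemma exists_max_matching :
    ∃ M : Finset (Sym2 V), IsMatchingSet G M ∧ M.card = matchingNumber G := by
  have h : matchingNumber G ∈
      {n : ℕ | ∃ M : Finset (Sym2 V), IsMatchingSet G M ∧ M.card = n} := by
    apply Nat.sSup_mem
    · exact ⟨0, ∅, ⟨by simp [IsMatchingSet], rfl⟩⟩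
    · exact bddAbove_matching G
  obtain ⟨M, hM, hc⟩ := h
  exact ⟨M, hM, hc⟩

/-- Unmatched vertices of a maximum matching form an independent set. -/
lemma unmatched_indep {M : Finset (Sym2 V)} (hM : IsMatchingSet G M)
    (hmax : M.card = matchingNumber G) {u w : V}
    (hu : ¬ ∃ e ∈ M, u ∈ e) (hw : ¬ ∃ e ∈ M, w ∈ e) : ¬ G.Adj u w := by
  intro hadj
  set e0 : Sym2 V := s(u, w) with he0
  have he0M : e0 ∉ M := fun h => hu ⟨e0, h, by simp [he0]⟩
  have hM' : IsMatchingSet G (insert e0 M) := by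
    constructor
    · rw [coe_insert, Set.insert_subset_iff]
      exact ⟨hadj, hM.1⟩
    · rw [coe_insert]
      apply Set.Pairwise.insert hM.2
      intro f hf hne
      have key : ∀ v : V, ¬(v ∈ e0 ∧ v ∈ f) := by
        rintro v ⟨hv0, hvf⟩
        rw [he0, Sym2.mem_iff] at hv0
        rcases hv0 with rfl | rfl
        · exact hu ⟨f, hf, hvf⟩
        · exact hw ⟨f, hf, hvf⟩
      exact ⟨key, fun v ⟨h1, h2⟩ => key v ⟨h2, h1⟩⟩
  have := matching_card_le G hM'
  rw [Finset.card_insert_of_notMem he0M, hmax] at this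
  omega

end VNAux
end VNAux

/-- The v-number of the closed neighborhood ideal is at most twice the matching number. -/
theorem vNumber_le_two_mul_matchingNumber {V : Type*} [Fintype V] [DecidableEq V]
    (K : Type*) [Field K] (G : SimpleGraph V) (hG : G.Connected) :
    vNumber (cnIdeal K G) ≤ 2 * matchingNumber G := by
  classical
  open VNAux Finset MvPolynomial in
  obtain ⟨M, hM, hMcard⟩ := exists_max_matching G
  set matched : Finset V := univ.filter (fun v => ∃ e ∈ M, v ∈ e) with hmatched
  -- the matched vertices number at most `2 * matchingNumber G`
  have hmc : matched.card ≤ 2 * matchingNumber G := by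
    have h1 : matched ⊆ M.biUnion (fun e => univ.filter (fun v => v ∈ e)) := by
      intro v hv
      rw [hmatched, mem_filter] at hv
      obtain ⟨-, e, he, hve⟩ := hv
      exact mem_biUnion.mpr ⟨e, he, mem_filter.mpr ⟨mem_univ v, hve⟩⟩
    have h2 : ∀ e ∈ M, (univ.filter (fun v => v ∈ e)).card ≤ 2 := by
      intro e _
      induction e using Sym2.ind with
      | _ a b =>
        have hsub : univ.filter (fun v => v ∈ (s(a, b) : Sym2 V)) ⊆ {a, b} := by
          intro v hv
          rw [mem_filter, Sym2.mem_iff] at hv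
          simpa using hv.2
        calc (univ.filter (fun v => v ∈ (s(a, b) : Sym2 V))).card
            ≤ ({a, b} : Finset V).card := card_le_card hsub
          _ ≤ 2 := (card_insert_le _ _).trans (by simp)
    calc matched.card ≤ (M.biUnion (fun e => univ.filter (fun v => v ∈ e))).card :=
          card_le_card h1
      _ ≤ ∑ e ∈ M, (univ.filter (fun v => v ∈ e)).card := card_biUnion_le
      _ ≤ ∑ _e ∈ M, 2 := Finset.sum_le_sum h2
      _ = 2 * M.card := by rw [Finset.sum_const, smul_eq_mul, mul_comm]
      _ = 2 * matchingNumber G := by rw [hMcard]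
  -- unmatched vertices
  set U : Finset V := univ \ matched with hU
  have hUnm : ∀ u ∈ U, ¬ ∃ e ∈ M, u ∈ e := by
    intro u hu h
    rw [hU, mem_sdiff] at hu
    exact hu.2 (mem_filter.mpr ⟨mem_univ u, h⟩)
  have hUind : ∀ u ∈ U, ∀ w ∈ U, ¬ G.Adj u w := fun u hu w hw =>
    unmatched_indep G hM hMcard (hUnm u hu) (hUnm w hw)
  -- a maximum-cardinality independent set containing U
  obtain ⟨D, hDmem, hDmax⟩ := Finset.exists_max_image
    ((univ : Finset (Finset V)).filter (fun D => U ⊆ D ∧ ∀ u ∈ D, ∀ w ∈ D, ¬ G.Adj u w))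
    Finset.card ⟨U, mem_filter.mpr ⟨mem_univ U, subset_rfl, hUind⟩⟩
  rw [mem_filter] at hDmem
  obtain ⟨-, hUD, hDind⟩ := hDmem
  -- D is dominating
  have hdom : ∀ v : V, v ∈ D ∨ ∃ d ∈ D, G.Adj d v := by
    intro v
    by_contra hc
    push_neg at hc
    obtain ⟨hvD, hnadj⟩ := hc
    have hD' : insert v D ∈
        (univ : Finset (Finset V)).filter
          (fun D => U ⊆ D ∧ ∀ u ∈ D, ∀ w ∈ D, ¬ G.Adj u w) := by
      rw [mem_filter]
      refine ⟨mem_univ _, hUD.trans (subset_insert _ _), ?_⟩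
      intro u hu w hw
      rcases mem_insert.mp hu with rfl | hu'
      · rcases mem_insert.mp hw with rfl | hw'
        · exact fun h => G.irrefl h
        · exact fun h => hnadj w hw' h.symm
      · rcases mem_insert.mp hw with rfl | hw'
        · exact hnadj u hu'
        · exact hDind u hu' w hw'
    have := hDmax _ hD'
    rw [card_insert_of_notMem hvD] at this
    omega
  -- the witness polynomial
  set F : Finset V := univ \ D with hF
  set f : MvPolynomial V K := ∏ u ∈ F, X u with hf
  have hprime : (vertexIdeal K D : Ideal (MvPolynomial V K)).IsPrime := vertexIdeal_isPrime D
  have hgen : ∀ v : V, (∏ u ∈ closedNbhd G v, X u : MvPolynomial V K) ∈ cnIdeal K G :=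
    fun v => Ideal.subset_span ⟨v, rfl⟩
  -- X d * f ∈ I for d ∈ D
  have hXdf : ∀ d ∈ D, (X d : MvPolynomial V K) * f ∈ cnIdeal K G := by
    intro d hd
    have hdN : d ∈ closedNbhd G d := (mem_closedNbhd G).mpr (Or.inl rfl)
    have hsub : (closedNbhd G d).erase d ⊆ F := by
      intro u hu
      rw [mem_erase] at hu
      obtain ⟨hune, huN⟩ := hu
      rw [mem_closedNbhd G] at huN
      rcases huN with rfl | hadj
      · exact absurd rfl hune
      · rw [hF, mem_sdiff]
        exact ⟨mem_univ u, fun huD => hDind d hd u huD hadj⟩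
    have hsplit : f = (∏ u ∈ (closedNbhd G d).erase d, X u) *
        ∏ u ∈ F \ (closedNbhd G d).erase d, (X u : MvPolynomial V K) := by
      rw [hf, ← Finset.prod_sdiff hsub]
      ring
    have : (X d : MvPolynomial V K) * f = (∏ u ∈ closedNbhd G d, X u) *
        ∏ u ∈ F \ (closedNbhd G d).erase d, (X u : MvPolynomial V K) := by
      rw [hsplit, ← Finset.mul_prod_erase _ _ hdN]
      ring
    rw [this]
    exact Ideal.mul_mem_right _ _ (hgen d)
  -- I ≤ p
  have hIp : cnIdeal K G ≤ vertexIdeal K D := by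
    rw [cnIdeal, Ideal.span_le]
    rintro x ⟨v, rfl⟩
    have hex : ∃ d ∈ D, d ∈ closedNbhd G v := by
      rcases hdom v with hv | ⟨d, hd, hadj⟩
      · exact ⟨v, hv, (mem_closedNbhd G).mpr (Or.inl rfl)⟩
      · exact ⟨d, hd, (mem_closedNbhd G).mpr (Or.inr hadj.symm)⟩
    obtain ⟨d, hdD, hdN⟩ := hex
    have hXd : (X d : MvPolynomial V K) ∈ vertexIdeal K D :=
      Ideal.subset_span ⟨d, hdD, rfl⟩
    simp only [SetLike.mem_coe]
    rw [← Finset.mul_prod_erase _ _ hdN]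
    exact Ideal.mul_mem_right _ _ hXd
  -- f ∉ p
  have hfp : f ∉ vertexIdeal K D := by
    intro hfmem
    rw [hf] at hfmem
    obtain ⟨u, huF, hXu⟩ := (Ideal.IsPrime.prod_mem_iff (hp := hprime)).mp hfmem
    have huD : u ∈ D := mem_of_X_mem_vertexIdeal hXu
    rw [hF, mem_sdiff] at huF
    exact huF.2 huD
  -- the colon ideal equals p
  have hcolon : Submodule.colon (cnIdeal K G) (Ideal.span {f}) = vertexIdeal K D := by
    apply le_antisymm
    · intro g hg
      have hgf : g * f ∈ cnIdeal K G := Ideal.mem_colon_span_singleton.mp hg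
      rcases hprime.mem_or_mem (hIp hgf) with h | h
      · exact h
      · exact absurd h hfp
    · rw [vertexIdeal, Ideal.span_le]
      rintro x ⟨d, hd, rfl⟩
      simp only [SetLike.mem_coe]
      rw [Ideal.mem_colon_span_singleton]
      exact hXdf d (Finset.mem_coe.mp hd)
  -- p is an associated prime
  have hrf : ∀ r : MvPolynomial V K, r * f ∈ cnIdeal K G ↔ r ∈ vertexIdeal K D := by
    intro r
    rw [← hcolon, Ideal.mem_colon_span_singleton]
  have hann : vertexIdeal K D ∈
      associatedPrimes (MvPolynomial V K) (MvPolynomial V K ⧸ cnIdeal K G) := by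
    refine ⟨hprime, Ideal.Quotient.mk (cnIdeal K G) f, ?_⟩
    have hc : (⊥ : Submodule (MvPolynomial V K) (MvPolynomial V K ⧸ cnIdeal K G)).colon
        {Ideal.Quotient.mk (cnIdeal K G) f} = vertexIdeal K D := by
      ext r
      rw [Submodule.mem_colon_singleton, Submodule.mem_bot]
      have hsmul : r • (Ideal.Quotient.mk (cnIdeal K G) f) =
          Ideal.Quotient.mk (cnIdeal K G) (r * f) := rfl
      rw [hsmul, Ideal.Quotient.eq_zero_iff_mem, hrf]
    rw [hc, hprime.radical]
  -- homogeneity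
  have hhom : f.IsHomogeneous F.card := by
    have h := MvPolynomial.IsHomogeneous.prod F (fun u => (X u : MvPolynomial V K))
      (fun _ => 1) (fun i _ => isHomogeneous_X K i)
    rw [Finset.sum_const, smul_eq_mul, mul_one] at h
    exact h
  -- conclude
  have h1 : vNumber (cnIdeal K G) ≤ F.card :=
    Nat.sInf_le ⟨f, hhom, by rw [hcolon]; exact hann⟩
  have h2 : F.card ≤ 2 * matchingNumber G := by
    have hFm : F ⊆ matched := by
      intro v hv
      rw [hF, mem_sdiff] at hv
      by_contra hvm
      exact hv.2 (hUD (mem_sdiff.mpr ⟨mem_univ v, hvm⟩))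
    exact le_trans (card_le_card hFm) hmc
  omega
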